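/- For n ≥ 4, every element of the dihedral inverse monoid DI_n (the set of all restrictions of elements of the dihedral group D_{2n} ≤ Sym_n) is a product of elements from {g, h, e_n}; that is, {g, h, e_n} generates DI_n as a monoid. -/

import Mathlib

/-- Powers in the symmetric inverse monoid (left-to-right composition). -/
def dPow (f : PartialEquiv ℕ ℕ) : ℕ → PartialEquiv ℕ ℕ
  | 0 => PartialEquiv.refl ℕ
  | k + 1 => (dPow f k).trans f

/-- The partial identity `e_j` on `{1,…,n} \ {j}`. -/
def dE (n j : ℕ) : PartialEquiv ℕ ℕ := PartialEquiv.ofSet (Set.Icc 1 n \ {j})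

/-- The `n`-cycle `g : i ↦ i+1 (mod n)` on `{1,…,n}`. -/
def dCyc (n : ℕ) : PartialEquiv ℕ ℕ where
  toFun k := if k = n then 1 else k + 1
  invFun k := if k = 1 then n else k - 1
  source := Set.Icc 1 n
  target := Set.Icc 1 n
  map_source' := by
    intro k hk
    simp only [Set.mem_Icc] at *
    split_ifs <;> omega
  map_target' := by
    intro k hk
    simp only [Set.mem_Icc] at *
    split_ifs <;> omega
  left_inv' := by
    intro k hk
    simp only [Set.mem_Icc] at hk
    split_ifs <;> omega
  right_inv' := by
    intro k hk
    simp only [Set.mem_Icc] at hk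
    split_ifs <;> omega

/-- The reversal `h : k ↦ n+1-k` on `{1,…,n}`. -/
def dRev (n : ℕ) : PartialEquiv ℕ ℕ where
  toFun k := n + 1 - k
  invFun k := n + 1 - k
  source := Set.Icc 1 n
  target := Set.Icc 1 n
  map_source' := by
    intro k hk; simp only [Set.mem_Icc] at *; omega
  map_target' := by
    intro k hk; simp only [Set.mem_Icc] at *; omega
  left_inv' := by
    intro k hk; simp only [Set.mem_Icc] at hk; omega
  right_inv' := by
    intro k hk; simp only [Set.mem_Icc] at hk; omega

/-- The partial shift `x : j ↦ j+1` with domain `{1,…,n-1}`. -/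
def dShift (n : ℕ) : PartialEquiv ℕ ℕ where
  toFun k := k + 1
  invFun k := k - 1
  source := Set.Icc 1 (n - 1)
  target := Set.Icc 2 n
  map_source' := by
    intro k hk; simp only [Set.mem_Icc] at *; omega
  map_target' := by
    intro k hk; simp only [Set.mem_Icc] at *; omega
  left_inv' := by
    intro k hk; simp only [Set.mem_Icc] at hk; omega
  right_inv' := by
    intro k hk; simp only [Set.mem_Icc] at hk; omega

/-- The rank-2 partial bijection `x_i` with domain `{1, 1+i}`, sending
`1 ↦ 1` and `1+i ↦ n-i+1`. -/
def dXi (n i : ℕ) (h1 : 1 ≤ i) (h2 : i < n) : PartialEquiv ℕ ℕ where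
  toFun k := if k = 1 then 1 else n - i + 1
  invFun k := if k = 1 then 1 else 1 + i
  source := {1, 1 + i}
  target := {1, n - i + 1}
  map_source' := by
    intro k _
    split_ifs <;> simp
  map_target' := by
    intro k _
    split_ifs <;> simp
  left_inv' := by
    intro k hk
    simp only [Set.mem_insert_iff, Set.mem_singleton_iff] at hk
    rcases hk with rfl | rfl <;> (split_ifs <;> omega)
  right_inv' := by
    intro k hk
    simp only [Set.mem_insert_iff, Set.mem_singleton_iff] at hk
    rcases hk with rfl | rfl <;> (split_ifs <;> omega)

/-- `DI_n`: the partial bijections of `{1,…,n}` which are restrictions of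
elements `g^k` or `h g^k` of the dihedral group. -/
def DI (n : ℕ) : Set (PartialEquiv ℕ ℕ) :=
  {α | α.source ⊆ Set.Icc 1 n ∧
    ∃ k : ℕ, Set.EqOn (↑α) (↑(dPow (dCyc n) k)) α.source ∨
      Set.EqOn (↑α) (↑((dRev n).trans (dPow (dCyc n) k))) α.source}

/-! The partial identity `e_j` on `{1,…,n} \ {j}` equals `g^(n-j) e_n g^j`: the rotation
`g^(n-j)` moves `j` to `n`, where `e_n` removes it, and `g^j` rotates back since `g^n` is the
identity of `{1,…,n}`. Composing such factors yields every partial identity of `{1,…,n}`, and an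
element of `DI_n` with domain `X` is the partial identity on `X` followed by `g^k` or `h g^k`. -/

open PartialEquiv Set

def IsDIGenerator (n : ℕ) (w : PartialEquiv ℕ ℕ) : Prop :=
  w = dCyc n ∨ w = dRev n ∨ w = dE n n

theorem IsDIGenerator.cyc (n : ℕ) : IsDIGenerator n (dCyc n) := Or.inl rfl

theorem IsDIGenerator.rev (n : ℕ) : IsDIGenerator n (dRev n) := Or.inr (Or.inl rfl)

theorem IsDIGenerator.e (n : ℕ) : IsDIGenerator n (dE n n) := Or.inr (Or.inr rfl)

def IsGenProduct (n : ℕ) (σ : PartialEquiv ℕ ℕ) : Prop :=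
  ∃ l : List (PartialEquiv ℕ ℕ), (∀ w ∈ l, IsDIGenerator n w) ∧
    σ ≈ l.foldl PartialEquiv.trans (ofSet (Icc 1 n))

namespace IsGenProduct

variable {n : ℕ} {σ τ : PartialEquiv ℕ ℕ}

theorem ofSet_Icc : IsGenProduct n (ofSet (Icc 1 n)) :=
  ⟨[], by simp, Setoid.refl _⟩

theorem congr (hσ : IsGenProduct n σ) (h : σ ≈ τ) : IsGenProduct n τ :=
  let ⟨l, hl, hσl⟩ := hσ
  ⟨l, hl, Setoid.trans (Setoid.symm h) hσl⟩

theorem trans_generator (hσ : IsGenProduct n σ) {w : PartialEquiv ℕ ℕ}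
    (hw : IsDIGenerator n w) : IsGenProduct n (σ.trans w) := by
  obtain ⟨l, hl, hσl⟩ := hσ
  refine ⟨l ++ [w], ?_, ?_⟩
  · simpa [or_imp, forall_and] using ⟨hl, hw⟩
  · simpa using EqOnSource.trans' hσl (Setoid.refl w)

theorem trans_dPow (hσ : IsGenProduct n σ) {w : PartialEquiv ℕ ℕ} (hw : IsDIGenerator n w) :
    ∀ k, IsGenProduct n (σ.trans (dPow w k))
  | 0 => by simpa [dPow] using hσ
  | k + 1 => by
    rw [dPow, ← trans_assoc]
    exact (trans_dPow hσ hw k).trans_generator hw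

end IsGenProduct

theorem dPow_add (f : PartialEquiv ℕ ℕ) (a : ℕ) :
    ∀ b, dPow f (a + b) = (dPow f a).trans (dPow f b)
  | 0 => by simp [dPow]
  | b + 1 => by rw [← add_assoc, dPow, dPow, dPow_add f a b, trans_assoc]

theorem dPow_subset_source_mapsTo {f : PartialEquiv ℕ ℕ} {s : Set ℕ} (hs : s ⊆ f.source)
    (hf : MapsTo f s s) : ∀ k, s ⊆ (dPow f k).source ∧ MapsTo (dPow f k) s s
  | 0 => ⟨subset_univ s, mapsTo_id s⟩
  | k + 1 => by
    obtain ⟨hks, hkm⟩ := dPow_subset_source_mapsTo hs hf k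
    exact ⟨fun x hx => ⟨hks hx, hs (hkm hx)⟩, hf.comp hkm⟩

theorem Icc_subset_dPow_dCyc_source (n k : ℕ) : Icc 1 n ⊆ (dPow (dCyc n) k).source :=
  (dPow_subset_source_mapsTo subset_rfl (dCyc n).mapsTo k).1

theorem mapsTo_dPow_dCyc (n k : ℕ) : MapsTo (dPow (dCyc n) k) (Icc 1 n) (Icc 1 n) :=
  (dPow_subset_source_mapsTo subset_rfl (dCyc n).mapsTo k).2

theorem dCyc_apply {n x : ℕ} (hx : x ∈ Icc 1 n) : dCyc n x = x % n + 1 := by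
  obtain ⟨hx1, hxn⟩ := hx
  change (if x = n then 1 else x + 1) = _
  split_ifs with h
  · simp [h]
  · rw [Nat.mod_eq_of_lt (by omega)]

theorem dPow_dCyc_apply {n x : ℕ} (hx : x ∈ Icc 1 n) :
    ∀ k, dPow (dCyc n) k x = (x - 1 + k) % n + 1
  | 0 => by
    obtain ⟨hx1, hxn⟩ := hx
    change x = _
    rw [Nat.mod_eq_of_lt (by omega)]
    omega
  | k + 1 => by
    change dCyc n (dPow (dCyc n) k x) = _
    rw [dCyc_apply (mapsTo_dPow_dCyc n k hx), dPow_dCyc_apply hx k, Nat.mod_add_mod, add_assoc]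

theorem dPow_dCyc_self_apply {n x : ℕ} (hx : x ∈ Icc 1 n) : dPow (dCyc n) n x = x := by
  obtain ⟨hx1, hxn⟩ := hx
  rw [dPow_dCyc_apply ⟨hx1, hxn⟩, Nat.add_mod_right, Nat.mod_eq_of_lt (by omega)]
  omega

theorem ofSet_trans_conj_dE_eqOnSource {n j : ℕ} {S : Set ℕ} (hS : S ⊆ Icc 1 n)
    (hj : j ∈ Icc 1 n) :
    (((ofSet S).trans (dPow (dCyc n) (n - j))).trans (dE n n)).trans (dPow (dCyc n) j) ≈
      ofSet (S \ {j}) := by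
  set P := dPow (dCyc n) (n - j)
  set Q := dPow (dCyc n) j
  have hQP : ∀ x ∈ Icc 1 n, Q (P x) = x := fun x hx => by
    rw [← Function.comp_apply (f := Q), ← coe_trans, ← dPow_add, Nat.sub_add_cancel hj.2,
      dPow_dCyc_self_apply hx]
  have hPj : P j = n := by
    obtain ⟨hj1, hjn⟩ := hj
    rw [dPow_dCyc_apply ⟨hj1, hjn⟩, Nat.mod_eq_of_lt (by omega)]
    omega
  have hP_eq_n : ∀ x ∈ Icc 1 n, P x = n ↔ x = j := fun x hx =>
    ⟨fun h => by rw [← hQP x hx, h, ← hPj, hQP j hj], fun h => h ▸ hPj⟩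
  refine ⟨?_, fun x hx => ?_⟩
  · ext x
    simp only [trans_source, ofSet_source, ofSet_coe, coe_trans, dE, preimage_id_eq, id_eq,
      mem_inter_iff, mem_preimage, Function.comp_apply, mem_sdiff, mem_singleton_iff]
    constructor
    · rintro ⟨⟨⟨hxS, -⟩, -, hPx⟩, -⟩
      exact ⟨hxS, fun hxj => hPx ((hP_eq_n x (hS hxS)).2 hxj)⟩
    · rintro ⟨hxS, hxj⟩
      have hx := hS hxS
      exact ⟨⟨⟨hxS, Icc_subset_dPow_dCyc_source n _ hx⟩, mapsTo_dPow_dCyc n _ hx,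
        fun h => hxj ((hP_eq_n x hx).1 h)⟩,
        Icc_subset_dPow_dCyc_source n _ (mapsTo_dPow_dCyc n _ hx)⟩
  · exact hQP x (hS hx.1.1.1)

theorem IsGenProduct.ofSet_Icc_sdiff (n : ℕ) (T : Finset ℕ) :
    IsGenProduct n (ofSet (Icc 1 n \ T)) := by
  induction T using Finset.induction_on with
  | empty => simpa using IsGenProduct.ofSet_Icc
  | insert j T _ ih =>
    rw [Finset.coe_insert, insert_eq, union_comm, ← sdiff_sdiff]
    by_cases hj : j ∈ Icc 1 n
    · have h := ((ih.trans_dPow (.cyc n) (n - j)).trans_generator (.e n)).trans_dPow (.cyc n) j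
      exact h.congr (ofSet_trans_conj_dE_eqOnSource sdiff_subset hj)
    · rwa [sdiff_singleton_eq_self fun h => hj h.1]

theorem IsGenProduct.ofSet_of_subset {n : ℕ} {S : Set ℕ} (hS : S ⊆ Icc 1 n) :
    IsGenProduct n (ofSet S) := by
  have hfin : (Icc 1 n \ S).Finite := (finite_Icc 1 n).sdiff
  simpa [sdiff_sdiff_cancel_left hS] using IsGenProduct.ofSet_Icc_sdiff n hfin.toFinset

theorem eqOnSource_ofSet_source_trans {X Y : Type*} {e f : PartialEquiv X Y}
    (hs : e.source ⊆ f.source) (h : EqOn e f e.source) : e ≈ (ofSet e.source).trans f :=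
  ⟨by simp [trans_source, inter_eq_left.2 hs], h⟩

theorem isGenProduct_of_mem_DI {n : ℕ} {α : PartialEquiv ℕ ℕ} (hα : α ∈ DI n) :
    IsGenProduct n α := by
  obtain ⟨hS, k, hk | hk⟩ := hα
  · exact ((IsGenProduct.ofSet_of_subset hS).trans_dPow (.cyc n) k).congr
      (Setoid.symm (eqOnSource_ofSet_source_trans
        (hS.trans (Icc_subset_dPow_dCyc_source n k)) hk))
  · have hsource : Icc 1 n ⊆ ((dRev n).trans (dPow (dCyc n) k)).source := fun x hx =>
      ⟨hx, Icc_subset_dPow_dCyc_source n k ((dRev n).mapsTo hx)⟩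
    have h := ((IsGenProduct.ofSet_of_subset hS).trans_generator (.rev n)).trans_dPow (.cyc n) k
    rw [trans_assoc] at h
    exact h.congr (Setoid.symm (eqOnSource_ofSet_source_trans (hS.trans hsource) hk))

theorem stmt17_general (n : ℕ) (α : PartialEquiv ℕ ℕ) (hα : α ∈ DI n) :
    ∃ l : List (PartialEquiv ℕ ℕ),
      (∀ w ∈ l, w = dCyc n ∨ w = dRev n ∨ w = dE n n) ∧
      α ≈ l.foldl PartialEquiv.trans (PartialEquiv.ofSet (Set.Icc 1 n)) :=
  isGenProduct_of_mem_DI hα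

/-- For `n ≥ 4`, every element of `DI_n` is a product (left-to-right fold,
starting from the identity of `I_n`) of elements from `{g, h, e_n}`. -/
theorem stmt17 (n : ℕ) (hn : 4 ≤ n) (α : PartialEquiv ℕ ℕ) (hα : α ∈ DI n) :
    ∃ l : List (PartialEquiv ℕ ℕ),
      (∀ w ∈ l, w = dCyc n ∨ w = dRev n ∨ w = dE n n) ∧
      α ≈ l.foldl PartialEquiv.trans (PartialEquiv.ofSet (Set.Icc 1 n)) :=
  stmt17_general n α hα
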